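/- Given real weights 0 < w_1 ≤ w_2 ≤ ... ≤ w_k, define w'_1 = w_1 and, for i > 1, w'_i to be the smallest integer multiple of w'_(i-1) that is at least max(2·w'_(i-1), w_i). Then for every i, w_i ≤ w'_i ≤ 2^(i-1) · w_i, and each w'_i is a multiple of w'_(i-1) strictly greater than w'_(i-1). -/
import Mathlib


theorem stmt_5 (k : ℕ) (w w' : ℕ → ℝ)
    (hpos : 0 < w 1)
    (hmono : ∀ i j, 1 ≤ i → i ≤ j → j ≤ k → w i ≤ w j)
    (hw'1 : w' 1 = w 1)
    (hw'rec : ∀ i, 2 ≤ i → i ≤ k →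
      w' i = (⌈max (2 * w' (i - 1)) (w i) / w' (i - 1)⌉ : ℤ) * w' (i - 1)) :
    (∀ i, 1 ≤ i → i ≤ k → w i ≤ w' i ∧ w' i ≤ 2 ^ (i - 1) * w i) ∧
    (∀ i, 2 ≤ i → i ≤ k →
      (∃ n : ℕ, w' i = (n : ℝ) * w' (i - 1)) ∧ w' (i - 1) < w' i) := by
  have key : ∀ i, 1 ≤ i → i ≤ k →
      w i ≤ w' i ∧ w' i ≤ 2 ^ (i - 1) * w i ∧ 0 < w' i := by
    intro i
    induction i with
    | zero => omega
    | succ n ih =>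
      intro h1 hk
      rcases Nat.eq_or_lt_of_le h1 with h | h
      · -- n + 1 = 1
        have hn : n = 0 := by omega
        subst hn
        simp [hw'1, hpos, le_of_eq]
      · -- n ≥ 1
        have hn1 : 1 ≤ n := by omega
        have hnk : n ≤ k := by omega
        obtain ⟨ih1, ih2, ihp⟩ := ih hn1 hnk
        have hrec := hw'rec (n + 1) (by omega) hk
        simp only [Nat.add_sub_cancel] at hrec
        set p := w' n with hp
        have hwle : w n ≤ w (n + 1) := hmono n (n + 1) hn1 (by omega) hk
        have hwpos : 0 < w (n + 1) := lt_of_lt_of_le hpos (hmono 1 (n + 1) le_rfl (by omega) hk)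
        have hpne : p ≠ 0 := ne_of_gt ihp
        rcases le_or_gt (w (n + 1)) (2 * p) with hc | hc
        · -- max = 2p
          have hmax : max (2 * p) (w (n + 1)) = 2 * p := max_eq_left hc
          rw [hmax] at hrec
          have hdiv : 2 * p / p = 2 := by field_simp
          rw [hdiv] at hrec
          have h2 : (⌈(2:ℝ)⌉ : ℤ) = 2 := by norm_num
          rw [h2] at hrec
          have hval : w' (n + 1) = 2 * p := by rw [hrec]; push_cast; ring
          refine ⟨by linarith, ?_, by linarith⟩
          have h2n : (2:ℝ) ^ (n + 1 - 1) = 2 * 2 ^ (n - 1) := by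
            simp only [Nat.add_sub_cancel]
            rw [← pow_succ']
            congr 1
            omega
          rw [hval, h2n]
          have := mul_le_mul_of_nonneg_left hwle (by positivity : (0:ℝ) ≤ 2 ^ (n - 1))
          nlinarith [pow_pos (show (0:ℝ) < 2 by norm_num) (n - 1)]
        · -- max = w (n+1)
          have hmax : max (2 * p) (w (n + 1)) = w (n + 1) := max_eq_right hc.le
          rw [hmax] at hrec
          set c : ℤ := ⌈w (n + 1) / p⌉ with hcdef
          have hge : w (n + 1) / p ≤ (c : ℝ) := Int.le_ceil _
          have hlt : (c : ℝ) < w (n + 1) / p + 1 := Int.ceil_lt_add_one _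
          have hge' : w (n + 1) ≤ (c : ℝ) * p := by
            calc w (n + 1) = (w (n + 1) / p) * p := by field_simp
            _ ≤ (c : ℝ) * p := by nlinarith
          have hle' : (c : ℝ) * p ≤ w (n + 1) + p := by
            have : (c : ℝ) * p < (w (n + 1) / p + 1) * p := by nlinarith
            have h' : (w (n + 1) / p + 1) * p = w (n + 1) + p := by field_simp
            linarith
          refine ⟨by rw [hrec]; exact hge', ?_, by rw [hrec]; linarith⟩
          rw [hrec]
          have hple : p < w (n + 1) / 2 := by linarith
          have h2n : (2:ℝ) ≤ 2 ^ (n + 1 - 1) := by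
            simp only [Nat.add_sub_cancel]
            calc (2:ℝ) = 2 ^ 1 := by norm_num
            _ ≤ 2 ^ n := pow_le_pow_right₀ (by norm_num) hn1
          nlinarith
  refine ⟨fun i h1 hk => ⟨(key i h1 hk).1, (key i h1 hk).2.1⟩, ?_⟩
  intro i h2 hk
  have h1k : i - 1 ≤ k := by omega
  have h11 : 1 ≤ i - 1 := by omega
  obtain ⟨_, _, hpprev⟩ := key (i - 1) h11 h1k
  have hrec := hw'rec i h2 hk
  set p := w' (i - 1) with hp
  set c : ℤ := ⌈max (2 * p) (w i) / p⌉ with hcdef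
  have hmaxge : 2 * p ≤ max (2 * p) (w i) := le_max_left _ _
  have h2le : (2:ℝ) ≤ max (2 * p) (w i) / p := by
    rw [le_div_iff₀ hpprev]; linarith
  have hc2 : (2:ℤ) ≤ c := by
    have : ((2:ℤ):ℝ) ≤ (c:ℝ) := le_trans (by push_cast; linarith) (Int.le_ceil _)
    exact_mod_cast this
  constructor
  · refine ⟨c.toNat, ?_⟩
    rw [hrec]
    congr 1
    have h0 := Int.toNat_of_nonneg (show (0:ℤ) ≤ c by omega)
    exact_mod_cast h0.symm
  · rw [hrec]
    have : (2:ℝ) ≤ (c:ℝ) := by exact_mod_cast hc2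
    nlinarith
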